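/- Let C_{t₂} = span{Im A₁(t₂)ʲB(t₂) : j ≥ 0} and C̃_{t₂} = span{Im F(t₂,s)A₁(s)ʲB(s) : j ≥ 0, s ∈ ℝ}. If the Lax equation A₁(t₂) = F(t₂,t₂')A₁(t₂')F(t₂',t₂) holds, then F(t₂,t₂')C̃_{t₂'} = C̃_{t₂}, and C_{t₂} ⊆ C̃_{t₂}. -/

import Mathlib

/-!
An evolution family `F` with `F s t ∘ F r s = F r t` and `F t t = id` consists of continuous
linear isomorphisms, `F s t` having inverse `F t s`. The global reachable set at time `t` is
`⋃ s, F s t '' G s`, where `G s` collects the vectors `A₁(s)ʲ B(s) e`, so `F t t'` maps it onto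
the reachable set at time `t'`; an isomorphism commutes with taking closed linear spans. The
local set at `t` is the `s = t` part of the global one.
-/

theorem ContinuousLinearEquiv.map_topologicalClosure {R : Type*} [Semiring R]
    {M N : Type*} [TopologicalSpace M] [AddCommMonoid M] [Module R M]
    [TopologicalSpace N] [AddCommMonoid N] [Module R N] [ContinuousAdd M] [ContinuousConstSMul R M]
    [ContinuousAdd N] [ContinuousConstSMul R N]
    (e : M ≃L[R] N) (p : Submodule R M) :
    p.topologicalClosure.map (e : M →ₗ[R] N) = (p.map (e : M →ₗ[R] N)).topologicalClosure :=
  SetLike.coe_injective (e.image_closure p)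

section EvolutionFamily

variable {R : Type*} [Semiring R] {ι : Type*} {M : ι → Type*}
  [∀ i, TopologicalSpace (M i)] [∀ i, AddCommMonoid (M i)] [∀ i, Module R (M i)]
  {F : ∀ i j, M i →L[R] M j}

theorem evolution_apply_apply (hcomp : ∀ i j k, (F j k).comp (F i j) = F i k)
    (i j k : ι) (x : M i) : F j k (F i j x) = F i k x :=
  congr($(hcomp i j k) x)

theorem image_iUnion_image_evolution (hcomp : ∀ i j k, (F j k).comp (F i j) = F i k)
    (G : ∀ i, Set (M i)) (j k : ι) :
    F j k '' ⋃ i, F i j '' G i = ⋃ i, F i k '' G i := by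
  simp only [Set.image_iUnion, Set.image_image, evolution_apply_apply hcomp]

def evolutionEquiv (hcomp : ∀ i j k, (F j k).comp (F i j) = F i k)
    (hid : ∀ i, F i i = ContinuousLinearMap.id R (M i)) (i j : ι) : M i ≃L[R] M j :=
  .equivOfInverse' (F i j) (F j i) ((hcomp j i j).trans (hid j)) ((hcomp i j i).trans (hid i))

end EvolutionFamily

theorem controllability_subspaces_general
    (H : ℝ → Type*) [∀ t, NormedAddCommGroup (H t)] [∀ t, InnerProductSpace ℂ (H t)]
    (E : Type*) [NormedAddCommGroup E] [InnerProductSpace ℂ E]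
    (F : ∀ s t : ℝ, H s →L[ℂ] H t)
    (hcomp : ∀ r s t : ℝ, (F s t).comp (F r s) = F r t)
    (hid : ∀ t : ℝ, F t t = ContinuousLinearMap.id ℂ (H t))
    (A₁ : ∀ t : ℝ, H t →L[ℂ] H t)
    (B : ∀ t : ℝ, E →L[ℂ] H t) :
    ∀ t₂ t₂' : ℝ,
      Submodule.map ((F t₂' t₂ : H t₂' →L[ℂ] H t₂) : H t₂' →ₗ[ℂ] H t₂)
        ((Submodule.span ℂ
          {x : H t₂' | ∃ (s : ℝ) (j : ℕ) (e : E),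
            F s t₂' (((A₁ s) ^ j) (B s e)) = x}).topologicalClosure) =
      (Submodule.span ℂ
          {x : H t₂ | ∃ (s : ℝ) (j : ℕ) (e : E),
            F s t₂ (((A₁ s) ^ j) (B s e)) = x}).topologicalClosure ∧
      (Submodule.span ℂ
          {x : H t₂ | ∃ (j : ℕ) (e : E), ((A₁ t₂) ^ j) (B t₂ e) = x}).topologicalClosure ≤
      (Submodule.span ℂ
          {x : H t₂ | ∃ (s : ℝ) (j : ℕ) (e : E),
            F s t₂ (((A₁ s) ^ j) (B s e)) = x}).topologicalClosure := by
  intro t₂ t₂'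
  set G : ∀ s, Set (H s) := fun s ↦ {y | ∃ (j : ℕ) (e : E), ((A₁ s) ^ j) (B s e) = y}
  have reachable_eq : ∀ t, {x : H t | ∃ (s : ℝ) (j : ℕ) (e : E),
      F s t (((A₁ s) ^ j) (B s e)) = x} = ⋃ s, F s t '' G s := fun t ↦ by
    ext x
    simp [G]
  refine ⟨?_, ?_⟩
  · rw [reachable_eq, reachable_eq, ← image_iUnion_image_evolution hcomp G t₂' t₂]
    exact ((evolutionEquiv hcomp hid t₂' t₂).map_topologicalClosure _).trans
      (congrArg _ (Submodule.map_span _ _))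
  · refine Submodule.topologicalClosure_mono (Submodule.span_mono ?_)
    rintro x ⟨j, e, rfl⟩
    exact ⟨t₂, j, e, by rw [hid]; rfl⟩

/-- With the integrated Lax equation, the global controllability subspaces satisfy
`F(t₂,t₂') C̃_{t₂'} = C̃_{t₂}`, and the local ones satisfy `C_{t₂} ⊆ C̃_{t₂}`. -/
theorem controllability_subspaces
    (H : ℝ → Type*) [∀ t, NormedAddCommGroup (H t)] [∀ t, InnerProductSpace ℂ (H t)]
    (E : Type*) [NormedAddCommGroup E] [InnerProductSpace ℂ E]
    (F : ∀ s t : ℝ, H s →L[ℂ] H t)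
    (hcomp : ∀ r s t : ℝ, (F s t).comp (F r s) = F r t)
    (hid : ∀ t : ℝ, F t t = ContinuousLinearMap.id ℂ (H t))
    (A₁ : ∀ t : ℝ, H t →L[ℂ] H t)
    (hLax : ∀ t t' : ℝ, A₁ t = ((F t' t).comp (A₁ t')).comp (F t t'))
    (B : ∀ t : ℝ, E →L[ℂ] H t) :
    ∀ t₂ t₂' : ℝ,
      Submodule.map ((F t₂' t₂ : H t₂' →L[ℂ] H t₂) : H t₂' →ₗ[ℂ] H t₂)
        ((Submodule.span ℂ
          {x : H t₂' | ∃ (s : ℝ) (j : ℕ) (e : E),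
            F s t₂' (((A₁ s) ^ j) (B s e)) = x}).topologicalClosure) =
      (Submodule.span ℂ
          {x : H t₂ | ∃ (s : ℝ) (j : ℕ) (e : E),
            F s t₂ (((A₁ s) ^ j) (B s e)) = x}).topologicalClosure ∧
      (Submodule.span ℂ
          {x : H t₂ | ∃ (j : ℕ) (e : E), ((A₁ t₂) ^ j) (B t₂ e) = x}).topologicalClosure ≤
      (Submodule.span ℂ
          {x : H t₂ | ∃ (s : ℝ) (j : ℕ) (e : E),
            F s t₂ (((A₁ s) ^ j) (B s e)) = x}).topologicalClosure :=
  controllability_subspaces_general H E F hcomp hid A₁ B
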